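/- arXiv:1504.07714 — 9 statements merged into one kernel-verified Lean document; each statement's English description precedes it below -/
import Mathlib

section
/- For every vertex v of the set-graph G_{A^(n)} with n ≥ 2, the degree of v satisfies 2^(n−1) − 1 ≤ deg(v) ≤ 2^n − 2. -/
/-!
The neighbours of a vertex `S` are the sets `T ≠ S` meeting `S`. Fixing `a ∈ S`, they include
the `2^(n-1) - 1` sets `T ≠ S` containing `a`, and they exclude `S` and `∅` among all `2^n`
subsets.
-/

/-- The set-graph `G_{A^(n)}`: vertices are the nonempty subsets of an `n`-element set,
two distinct vertices being adjacent iff the corresponding subsets intersect. -/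
def setGraph (n : ℕ) : SimpleGraph {S : Finset (Fin n) // S.Nonempty} where
  Adj S T := S ≠ T ∧ (S.1 ∩ T.1).Nonempty
  symm := ⟨fun S T h => ⟨h.1.symm, by
    obtain ⟨_, h2⟩ := h
    rwa [Finset.inter_comm]⟩⟩
  loopless := ⟨fun S h => h.1 rfl⟩

instance (n : ℕ) : DecidableRel (setGraph n).Adj := fun S T =>
  inferInstanceAs (Decidable (S ≠ T ∧ (S.1 ∩ T.1).Nonempty))

open Finset

theorem Finset.card_filter_mem_eq_two_pow_pred {α : Type*} [Fintype α] [DecidableEq α] (a : α) :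
    #{s : Finset α | a ∈ s} = 2 ^ (Fintype.card α - 1) := by
  rw [← card_univ, ← card_erase_of_mem (mem_univ a), ← card_powerset]
  refine card_nbij' (·.erase a) (insert a) ?_ ?_ ?_ ?_ <;> intro s hs <;> simp_all [Set.subset_def]

theorem setGraph_degree_eq (n : ℕ) (v : {S : Finset (Fin n) // S.Nonempty}) :
    (setGraph n).degree v = #((univ.filter fun T => (v.1 ∩ T).Nonempty).erase v.1) := by
  rw [← SimpleGraph.card_neighborFinset_eq_degree, ← card_map (Function.Embedding.subtype _)]
  congr 1
  ext T
  simp only [mem_map, SimpleGraph.mem_neighborFinset, Function.Embedding.coe_subtype, mem_erase,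
    mem_filter, mem_univ, true_and]
  constructor
  · rintro ⟨T, ⟨hne, hint⟩, rfl⟩
    exact ⟨fun h => hne (Subtype.ext h.symm), hint⟩
  · rintro ⟨hne, hint⟩
    exact ⟨⟨T, hint.mono inter_subset_right⟩,
      ⟨fun h => hne (congrArg Subtype.val h).symm, hint⟩, rfl⟩

theorem two_pow_pred_sub_one_le_setGraph_degree (n : ℕ)
    (v : {S : Finset (Fin n) // S.Nonempty}) :
    2 ^ (n - 1) - 1 ≤ (setGraph n).degree v := by
  obtain ⟨a, ha⟩ := v.2
  have hsub : univ.filter (a ∈ ·) ⊆ univ.filter fun T => (v.1 ∩ T).Nonempty :=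
    monotone_filter_right _ fun _ _ haT => ⟨a, mem_inter.2 ⟨ha, haT⟩⟩
  calc 2 ^ (n - 1) - 1 = #((univ.filter (a ∈ ·)).erase v.1) := by
        rw [card_erase_of_mem (by simpa using ha), card_filter_mem_eq_two_pow_pred,
          Fintype.card_fin]
    _ ≤ (setGraph n).degree v :=
        setGraph_degree_eq n v ▸ card_le_card (erase_subset_erase _ hsub)

theorem setGraph_degree_le_two_pow_sub_two (n : ℕ)
    (v : {S : Finset (Fin n) // S.Nonempty}) :
    (setGraph n).degree v ≤ 2 ^ n - 2 := by
  have hsub : univ.filter (fun T => (v.1 ∩ T).Nonempty) ⊆ univ.erase ∅ := fun T hT =>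
    mem_erase.2 ⟨((mem_filter.1 hT).2.mono inter_subset_right).ne_empty, mem_univ T⟩
  calc (setGraph n).degree v ≤ #((univ.erase ∅).erase v.1) :=
        setGraph_degree_eq n v ▸ card_le_card (erase_subset_erase _ hsub)
    _ = 2 ^ n - 2 := by
        rw [card_erase_of_mem (mem_erase.2 ⟨v.2.ne_empty, mem_univ _⟩),
          card_erase_of_mem (mem_univ _), card_univ, Fintype.card_finset, Fintype.card_fin]
        omega

theorem stmt_0_general (n : ℕ) (v : {S : Finset (Fin n) // S.Nonempty}) :
    2 ^ (n - 1) - 1 ≤ (setGraph n).degree v ∧ (setGraph n).degree v ≤ 2 ^ n - 2 :=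
  ⟨two_pow_pred_sub_one_le_setGraph_degree n v, setGraph_degree_le_two_pow_sub_two n v⟩

theorem stmt_0 (n : ℕ) (hn : 2 ≤ n) (v : {S : Finset (Fin n) // S.Nonempty}) :
    2 ^ (n - 1) - 1 ≤ (setGraph n).degree v ∧ (setGraph n).degree v ≤ 2 ^ n - 2 :=
  stmt_0_general n v
end

section
/- For the set-graph G = G_{A^(n)} with n ≥ 2, the maximum degree equals twice the minimum degree: Δ(G) = 2·δ(G). -/
/-! A vertex `S` meets every subset of `A` except the `2 ^ (n - #S)` subsets of its complement,
so `deg S = 2 ^ n - 2 ^ (n - #S) - 1`. This increases with `#S`: the maximum `2 ^ n - 2` is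
attained at `S = A` and the minimum `2 ^ (n - 1) - 1` at the singletons. -/

open Finset

theorem Finset.card_filter_inter_nonempty {α : Type*} [Fintype α] [DecidableEq α] (s : Finset α) :
    #{t : Finset α | (s ∩ t).Nonempty} = 2 ^ Fintype.card α - 2 ^ (Fintype.card α - #s) := by
  have hcompl : ({t : Finset α | (s ∩ t).Nonempty} : Finset _) = univ \ sᶜ.powerset := by
    ext t
    simp [subset_compl_iff_disjoint_left, not_disjoint_iff_nonempty_inter]
  rw [hcompl, card_sdiff_of_subset (subset_univ _), card_powerset, card_compl, card_univ,
    Fintype.card_finset]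

theorem setGraph_neighborFinset_map {n : ℕ} (S : {S : Finset (Fin n) // S.Nonempty}) :
    ((setGraph n).neighborFinset S).map (Function.Embedding.subtype Finset.Nonempty) =
      ({T : Finset (Fin n) | (S.1 ∩ T).Nonempty} : Finset _).erase S.1 := by
  ext T
  simp only [mem_map, SimpleGraph.mem_neighborFinset, Function.Embedding.subtype_apply,
    mem_erase, mem_filter, mem_univ, true_and]
  constructor
  · rintro ⟨T, ⟨hne, hST⟩, rfl⟩
    exact ⟨fun h => hne (Subtype.ext h).symm, hST⟩
  · rintro ⟨hne, hST⟩
    exact ⟨⟨T, hST.mono inter_subset_right⟩, ⟨fun h => hne (congrArg Subtype.val h).symm, hST⟩,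
      rfl⟩

theorem setGraph_degree {n : ℕ} (S : {S : Finset (Fin n) // S.Nonempty}) :
    (setGraph n).degree S = 2 ^ n - 2 ^ (n - #S.1) - 1 := by
  have hS : S.1 ∈ ({T : Finset (Fin n) | (S.1 ∩ T).Nonempty} : Finset _) := by
    simpa using S.2
  rw [← SimpleGraph.card_neighborFinset_eq_degree, ← card_map, setGraph_neighborFinset_map,
    card_erase_of_mem hS, card_filter_inter_nonempty, Fintype.card_fin]

theorem setGraph_maxDegree {n : ℕ} (hn : 0 < n) : (setGraph n).maxDegree = 2 ^ n - 2 := by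
  have : Nonempty (Fin n) := ⟨⟨0, hn⟩⟩
  refine le_antisymm ((setGraph n).maxDegree_le_of_forall_degree_le _ fun S => ?_) ?_
  · have hpow := Nat.one_le_two_pow (n := n - #S.1)
    rw [setGraph_degree]
    omega
  · have hdeg := (setGraph n).degree_le_maxDegree ⟨univ, univ_nonempty⟩
    simp only [setGraph_degree, card_univ, Fintype.card_fin, Nat.sub_self, pow_zero] at hdeg
    omega

theorem setGraph_minDegree {n : ℕ} (hn : 0 < n) :
    (setGraph n).minDegree = 2 ^ (n - 1) - 1 := by
  let singleton : {S : Finset (Fin n) // S.Nonempty} := ⟨{⟨0, hn⟩}, singleton_nonempty _⟩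
  have : Nonempty {S : Finset (Fin n) // S.Nonempty} := ⟨singleton⟩
  have hpow := Nat.two_pow_pred_mul_two hn
  refine le_antisymm ?_ ((setGraph n).le_minDegree_of_forall_le_degree _ fun S => ?_)
  · have hdeg := (setGraph n).minDegree_le_degree singleton
    rw [setGraph_degree, card_singleton] at hdeg
    omega
  · have hmono : 2 ^ (n - #S.1) ≤ 2 ^ (n - 1) :=
      Nat.pow_le_pow_right two_pos (Nat.sub_le_sub_left (card_pos.mpr S.2) n)
    rw [setGraph_degree]
    omega

theorem stmt_1 (n : ℕ) (hn : 2 ≤ n) :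
    (setGraph n).maxDegree = 2 * (setGraph n).minDegree := by
  have hpos : 0 < n := by omega
  rw [setGraph_maxDegree hpos, setGraph_minDegree hpos]
  have hpow := Nat.two_pow_pred_mul_two hpos
  have hone := Nat.one_le_two_pow (n := n - 1)
  omega
end

section
/- In the set-graph G_{A^(n)} with n ≥ 2, there is exactly one vertex of degree 2^n − 2 (the maximum possible degree), namely the vertex corresponding to the whole set A. -/
theorem Fintype.card_subtype_finset_nonempty (α : Type*) [Fintype α] :
    Fintype.card {S : Finset α // S.Nonempty} = 2 ^ Fintype.card α - 1 := by
  classical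
  simp only [Finset.nonempty_iff_ne_empty, Fintype.card_subtype_compl, Fintype.card_finset,
    Fintype.card_unique]

namespace setGraph

theorem isUniversal_iff {n : ℕ} (v : {S : Finset (Fin n) // S.Nonempty}) :
    (setGraph n).IsUniversal v ↔ v.1 = Finset.univ := by
  refine ⟨fun hv => ?_, fun hv w hvw => ⟨hvw, by simpa [hv] using w.2⟩⟩
  rw [Finset.eq_univ_iff_forall]
  intro x
  by_contra hx
  -- otherwise the singleton `{x}` is a vertex disjoint from `v`
  have hvx : v ≠ ⟨{x}, Finset.singleton_nonempty x⟩ := fun h =>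
    hx (h ▸ Finset.mem_singleton_self x)
  obtain ⟨y, hy⟩ := (hv hvx).2
  rw [Finset.mem_inter, Finset.mem_singleton] at hy
  exact hx (hy.2 ▸ hy.1)

theorem degree_eq_iff {n : ℕ} (v : {S : Finset (Fin n) // S.Nonempty}) :
    (setGraph n).degree v = 2 ^ n - 2 ↔ v.1 = Finset.univ := by
  rw [← isUniversal_iff, ← SimpleGraph.degree_eq_card_sub_one,
    Fintype.card_subtype_finset_nonempty, Fintype.card_fin]
  omega

end setGraph

theorem stmt_2_general (n : ℕ) (hu : (Finset.univ : Finset (Fin n)).Nonempty) :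
    (setGraph n).degree ⟨Finset.univ, hu⟩ = 2 ^ n - 2 ∧
    ∀ v : {S : Finset (Fin n) // S.Nonempty},
      (setGraph n).degree v = 2 ^ n - 2 → v = ⟨Finset.univ, hu⟩ :=
  ⟨(setGraph.degree_eq_iff _).mpr rfl,
    fun v hv => Subtype.ext ((setGraph.degree_eq_iff v).mp hv)⟩

theorem stmt_2 (n : ℕ) (hn : 2 ≤ n) (hu : (Finset.univ : Finset (Fin n)).Nonempty) :
    (setGraph n).degree ⟨Finset.univ, hu⟩ = 2 ^ n - 2 ∧
    ∀ v : {S : Finset (Fin n) // S.Nonempty},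
      (setGraph n).degree v = 2 ^ n - 2 → v = ⟨Finset.univ, hu⟩ :=
  stmt_2_general n hu
end

section
/- A set-graph has no Pythagorean holes: in G_{A^(n)} with n ≥ 2, there do not exist three mutually adjacent vertices u, v, w with deg(u)² + deg(v)² = deg(w)². -/
/-!
A vertex `S` of the set-graph on `n` points is adjacent to every subset except itself and the
`2 ^ (n - |S|)` subsets of its complement, so its degree is `2 ^ n - 2 ^ (n - |S|) - 1`. For
`n ≥ 2` this is odd when `S` is proper and `2 ^ n - 2 ≡ 2 (mod 4)` when `S` is the whole set;
either way it is not divisible by `4`. The square of such a number is `1` or `4` modulo `8`, and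
no sum of two such squares is again one of them.
-/

open Finset

lemma Nat.sq_mod_eight_of_not_four_dvd {a : ℕ} (ha : ¬ 4 ∣ a) :
    a ^ 2 % 8 = 1 ∨ a ^ 2 % 8 = 4 := by
  rw [Nat.pow_mod]
  have : a % 8 < 8 := Nat.mod_lt a (by norm_num)
  interval_cases h : a % 8 <;> omega

lemma Nat.sq_add_sq_ne_sq_of_not_four_dvd {a b c : ℕ} (ha : ¬ 4 ∣ a) (hb : ¬ 4 ∣ b)
    (hc : ¬ 4 ∣ c) : a ^ 2 + b ^ 2 ≠ c ^ 2 := by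
  have := Nat.sq_mod_eight_of_not_four_dvd ha
  have := Nat.sq_mod_eight_of_not_four_dvd hb
  have := Nat.sq_mod_eight_of_not_four_dvd hc
  omega

namespace setGraph

variable {n : ℕ}

lemma map_subtype_neighborFinset (S : {S : Finset (Fin n) // S.Nonempty}) :
    ((setGraph n).neighborFinset S).map (Function.Embedding.subtype _) =
      univ.filter fun T => T ≠ S.1 ∧ ¬ Disjoint S.1 T := by
  ext T
  simp only [mem_map, SimpleGraph.mem_neighborFinset, Function.Embedding.subtype_apply,
    mem_filter, mem_univ, true_and, not_disjoint_iff_nonempty_inter]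
  constructor
  · rintro ⟨T', ⟨hne, hT'⟩, rfl⟩
    exact ⟨fun h => hne (Subtype.ext h.symm), hT'⟩
  · rintro ⟨hne, hT⟩
    exact ⟨⟨T, hT.mono inter_subset_right⟩, ⟨fun h => hne (congrArg Subtype.val h).symm, hT⟩, rfl⟩

lemma filter_not_adj_eq_insert_powerset_compl (S : Finset (Fin n)) :
    (univ.filter fun T => ¬ (T ≠ S ∧ ¬ Disjoint S T)) = insert S Sᶜ.powerset := by
  ext T
  simp only [mem_filter, mem_univ, true_and, not_and_not_right, ne_eq, mem_insert, mem_powerset,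
    subset_compl_iff_disjoint_left, disjoint_comm (a := S)]
  tauto

lemma degree_add_two_pow_add_one (S : {S : Finset (Fin n) // S.Nonempty}) :
    (setGraph n).degree S + 2 ^ (n - #S.1) + 1 = 2 ^ n := by
  have hS : S.1 ∉ S.1ᶜ.powerset := fun h =>
    S.2.ne_empty (disjoint_self.mp (subset_compl_iff_disjoint_left.mp (mem_powerset.mp h)))
  have hsplit := card_filter_add_card_filter_not (s := univ)
    (p := fun T : Finset (Fin n) => T ≠ S.1 ∧ ¬ Disjoint S.1 T)
  rw [← map_subtype_neighborFinset, card_map, filter_not_adj_eq_insert_powerset_compl,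
    card_insert_of_notMem hS, card_powerset, card_compl, Fintype.card_fin, card_univ,
    Fintype.card_finset, Fintype.card_fin] at hsplit
  rw [SimpleGraph.degree]
  omega

lemma not_four_dvd_degree (hn : 2 ≤ n) (S : {S : Finset (Fin n) // S.Nonempty}) :
    ¬ 4 ∣ (setGraph n).degree S := by
  have hdeg := degree_add_two_pow_add_one S
  have h4 : 4 ∣ 2 ^ n := Nat.pow_dvd_pow 2 hn
  have hcard : #S.1 ≤ n := by simpa using card_le_univ S.1
  rcases hcard.lt_or_eq with hproper | hfull
  · have : 2 ∣ 2 ^ (n - #S.1) := dvd_pow_self 2 (by omega)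
    omega
  · rw [hfull, Nat.sub_self, pow_zero] at hdeg
    omega

end setGraph

theorem stmt_6 (n : ℕ) (hn : 2 ≤ n) :
    ¬ ∃ u v w : {S : Finset (Fin n) // S.Nonempty},
      (setGraph n).Adj u v ∧ (setGraph n).Adj v w ∧ (setGraph n).Adj u w ∧
      (setGraph n).degree u ^ 2 + (setGraph n).degree v ^ 2 = (setGraph n).degree w ^ 2 := by
  rintro ⟨u, v, w, -, -, -, h⟩
  exact Nat.sq_add_sq_ne_sq_of_not_four_dvd (setGraph.not_four_dvd_degree hn u)
    (setGraph.not_four_dvd_degree hn v) (setGraph.not_four_dvd_degree hn w) h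
end

section
/- Let (a,b,c) be a Pythagorean triple of positive integers with a < b < c and a² + b² = c². Then the graph E(a,b,c) contains a Pythagorean hole: v₁, v₂, v₃ are mutually adjacent with deg(v₁) = a, deg(v₂) = b, deg(v₃) = c, and a² + b² = c². Moreover E(a,b,c) is of minimal order with this property: every simple graph containing three mutually adjacent vertices of degrees a, b and c has at least c + 1 vertices, and E(a,b,c) has exactly c + 1 vertices. -/
/-- The graphical embodiment `E(a,b,c)` of a Pythagorean triple `a < b < c`,
realized on the vertex set `Fin (c+1)`: vertex `0` is `v₁`, vertex `1` is `v₂`,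
vertex `2` is `v₃`, the vertices `3,…,a` form the set `A` (of size `a-2`, each joined to
`v₁,v₂,v₃`), the vertices `a+1,…,b` form the set `B` (of size `b-a`, each joined to
`v₂,v₃`) and the vertices `b+1,…,c` form the set `C` (of size `c-b`, each joined to `v₃`). -/
def embodiment (a b c : ℕ) : SimpleGraph (Fin (c + 1)) :=
  SimpleGraph.fromRel (fun i j =>
    (i.val < 3 ∧ j.val < 3) ∨
    (3 ≤ j.val ∧ j.val ≤ a ∧ i.val < 3) ∨
    (a < j.val ∧ j.val ≤ b ∧ (i.val = 1 ∨ i.val = 2)) ∨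
    (b < j.val ∧ j.val ≤ c ∧ i.val = 2))

instance (a b c : ℕ) : DecidableRel (embodiment a b c).Adj := fun i j =>
  decidable_of_iff _ (SimpleGraph.fromRel_adj _ i j).symm

lemma card_filter_fin (n : ℕ) (p : ℕ → Prop) [DecidablePred p] :
    (Finset.univ.filter (fun j : Fin n => p j.val)).card = ((Finset.range n).filter p).card := by
  rw [Finset.card_filter, Finset.card_filter,
    Fin.sum_univ_eq_sum_range (fun i => if p i then 1 else 0)]

theorem stmt_7 (a b c : ℕ) (ha : 0 < a) (hab : a < b) (hbc : b < c)
    (hpyth : a ^ 2 + b ^ 2 = c ^ 2) :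
    ((embodiment a b c).Adj 0 1 ∧ (embodiment a b c).Adj 1 2 ∧ (embodiment a b c).Adj 0 2 ∧
      (embodiment a b c).degree 0 = a ∧ (embodiment a b c).degree 1 = b ∧
      (embodiment a b c).degree 2 = c) ∧
    (∀ (V : Type) [Fintype V] (G : SimpleGraph V) [DecidableRel G.Adj] (u v w : V),
      G.Adj u v → G.Adj v w → G.Adj u w →
      G.degree u = a → G.degree v = b → G.degree w = c →
      c + 1 ≤ Fintype.card V) ∧
    Fintype.card (Fin (c + 1)) = c + 1 := by
  have ha3 : 3 ≤ a := by nlinarith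
  obtain ⟨k, rfl⟩ : ∃ k, c = k + 5 := ⟨c - 5, by omega⟩
  have e1 : ((1 : Fin (k+5+1)) : ℕ) = 1 := Fin.val_one _
  have e2 : ((2 : Fin (k+5+1)) : ℕ) = 2 := Fin.val_two
  refine ⟨⟨?_, ?_, ?_, ?_, ?_, ?_⟩, ?_, ?_⟩
  · simp only [embodiment, SimpleGraph.fromRel_adj, ne_eq, Fin.ext_iff, Fin.val_zero,
      e1, e2, true_or, or_true, true_and, and_true]
    omega
  · simp only [embodiment, SimpleGraph.fromRel_adj, ne_eq, Fin.ext_iff, Fin.val_zero,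
      e1, e2, true_or, or_true, true_and, and_true]
    omega
  · simp only [embodiment, SimpleGraph.fromRel_adj, ne_eq, Fin.ext_iff, Fin.val_zero,
      e1, e2, true_or, or_true, true_and, and_true]
    omega
  · -- degree 0 = a
    rw [SimpleGraph.degree, SimpleGraph.neighborFinset_eq_filter]
    have h : ∀ j : Fin (k+5+1),
        (embodiment a b (k+5)).Adj 0 j ↔ (1 ≤ j.val ∧ j.val ≤ a) := by
      intro j
      have hj := j.isLt
      simp only [embodiment, SimpleGraph.fromRel_adj, ne_eq, Fin.ext_iff, Fin.val_zero,
        e1, e2, true_or, or_true, true_and, and_true]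
      omega
    rw [Finset.filter_congr (fun j _ => by rw [h j])]
    rw [card_filter_fin _ (fun x => 1 ≤ x ∧ x ≤ a)]
    rw [show ((Finset.range (k+5+1)).filter (fun j => 1 ≤ j ∧ j ≤ a)) = Finset.Icc 1 a from by
      ext x; simp [Finset.mem_range]; omega]
    simp [Nat.card_Icc]
  · -- degree 1 = b
    rw [SimpleGraph.degree, SimpleGraph.neighborFinset_eq_filter]
    have h : ∀ j : Fin (k+5+1),
        (embodiment a b (k+5)).Adj 1 j ↔ (j.val ≤ b ∧ j.val ≠ 1) := by
      intro j
      have hj := j.isLt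
      simp only [embodiment, SimpleGraph.fromRel_adj, ne_eq, Fin.ext_iff, Fin.val_zero,
        e1, e2, true_or, or_true, true_and, and_true]
      omega
    rw [Finset.filter_congr (fun j _ => by rw [h j])]
    rw [card_filter_fin _ (fun x => x ≤ b ∧ x ≠ 1)]
    rw [show ((Finset.range (k+5+1)).filter (fun j => j ≤ b ∧ j ≠ 1))
        = (Finset.Icc 0 b).erase 1 from by
      ext x; simp [Finset.mem_range, Finset.mem_erase]; omega]
    rw [Finset.card_erase_of_mem (by simp; omega)]
    simp [Nat.card_Icc]
  · -- degree 2 = c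
    rw [SimpleGraph.degree, SimpleGraph.neighborFinset_eq_filter]
    have h : ∀ j : Fin (k+5+1),
        (embodiment a b (k+5)).Adj 2 j ↔ (j.val ≠ 2) := by
      intro j
      have hj := j.isLt
      simp only [embodiment, SimpleGraph.fromRel_adj, ne_eq, Fin.ext_iff, Fin.val_zero,
        e1, e2, true_or, or_true, true_and, and_true]
      omega
    rw [Finset.filter_congr (fun j _ => by rw [h j])]
    rw [card_filter_fin _ (fun x => x ≠ 2)]
    rw [show ((Finset.range (k+5+1)).filter (fun j => j ≠ 2))
        = (Finset.range (k+5+1)).erase 2 from by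
      ext x; simp [Finset.mem_range, Finset.mem_erase]; tauto]
    rw [Finset.card_erase_of_mem (by simp), Finset.card_range]
    omega
  · intro V _ G _ u v w _ _ _ _ _ hw
    classical
    have h1 : (insert w (G.neighborFinset w)).card ≤ Fintype.card V := by
      simpa using Finset.card_le_univ (insert w (G.neighborFinset w))
    rw [Finset.card_insert_of_notMem (G.notMem_neighborFinset_self w),
      SimpleGraph.card_neighborFinset_eq_degree, hw] at h1
    omega
  · exact Fintype.card_fin _
end

section
/- Let (a,b,c) ≠ (3,4,5) be a Pythagorean triple of positive integers with a < b < c and a² + b² = c². Then the graphical embodiment E(a,b,c) contains exactly one Pythagorean hole, namely the triangle on v₁, v₂, v₃: no other three mutually adjacent vertices u, v, w of E(a,b,c) satisfy deg(u)² + deg(v)² = deg(w)². -/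
lemma emb_adj {a b c : ℕ} (i j : Fin (c+1)) :
    (embodiment a b c).Adj i j ↔ i.val ≠ j.val ∧
      (((i.val < 3 ∧ j.val < 3) ∨
        (3 ≤ j.val ∧ j.val ≤ a ∧ i.val < 3) ∨
        (a < j.val ∧ j.val ≤ b ∧ (i.val = 1 ∨ i.val = 2)) ∨
        (b < j.val ∧ j.val ≤ c ∧ i.val = 2)) ∨
       ((j.val < 3 ∧ i.val < 3) ∨
        (3 ≤ i.val ∧ i.val ≤ a ∧ j.val < 3) ∨
        (a < i.val ∧ i.val ≤ b ∧ (j.val = 1 ∨ j.val = 2)) ∨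
        (b < i.val ∧ i.val ≤ c ∧ j.val = 2))) := by
  simp only [embodiment, SimpleGraph.fromRel_adj, ne_eq, Fin.ext_iff]

lemma deg_v1 (a b c : ℕ) (h3 : 3 ≤ a) (hab : a < b) (hbc : b < c)
    (x : Fin (c+1)) (hx : x.val = 0) : (embodiment a b c).degree x = a := by
  have h1c : 1 < c + 1 := by omega
  have hac : a < c + 1 := by omega
  have hset : (embodiment a b c).neighborFinset x = Finset.Icc ⟨1, h1c⟩ ⟨a, hac⟩ := by
    ext j
    rw [SimpleGraph.mem_neighborFinset, emb_adj, Finset.mem_Icc]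
    have hj := j.isLt
    simp only [Fin.le_def]
    omega
  show ((embodiment a b c).neighborFinset x).card = a
  rw [hset, Fin.card_Icc]
  rfl

lemma deg_v2 (a b c : ℕ) (h3 : 3 ≤ a) (hab : a < b) (hbc : b < c)
    (x : Fin (c+1)) (hx : x.val = 1) : (embodiment a b c).degree x = b := by
  have h0c : 0 < c + 1 := by omega
  have hbcc : b < c + 1 := by omega
  have hset : (embodiment a b c).neighborFinset x
      = (Finset.Icc ⟨0, h0c⟩ ⟨b, hbcc⟩).erase x := by
    ext j
    rw [SimpleGraph.mem_neighborFinset, emb_adj, Finset.mem_erase, Finset.mem_Icc]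
    have hj := j.isLt
    simp only [Fin.le_def, ne_eq, Fin.ext_iff]
    omega
  show ((embodiment a b c).neighborFinset x).card = b
  rw [hset, Finset.card_erase_of_mem, Fin.card_Icc]
  · simp
  · rw [Finset.mem_Icc]
    constructor <;> simp [Fin.le_def, hx] <;> omega

lemma deg_v3 (a b c : ℕ) (h3 : 3 ≤ a) (hab : a < b) (hbc : b < c)
    (x : Fin (c+1)) (hx : x.val = 2) : (embodiment a b c).degree x = c := by
  have hset : (embodiment a b c).neighborFinset x = Finset.univ.erase x := by
    ext j
    rw [SimpleGraph.mem_neighborFinset, emb_adj, Finset.mem_erase]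
    have hj := j.isLt
    simp only [Finset.mem_univ, and_true, ne_eq, Fin.ext_iff]
    omega
  show ((embodiment a b c).neighborFinset x).card = c
  rw [hset, Finset.card_erase_of_mem (Finset.mem_univ x), Finset.card_univ,
    Fintype.card_fin]
  rfl

lemma deg_A (a b c : ℕ) (h3 : 3 ≤ a) (hab : a < b) (hbc : b < c)
    (x : Fin (c+1)) (hx3 : 3 ≤ x.val) (hxa : x.val ≤ a) :
    (embodiment a b c).degree x = 3 := by
  have h0c : 0 < c + 1 := by omega
  have h2c : 2 < c + 1 := by omega
  have hset : (embodiment a b c).neighborFinset x = Finset.Icc ⟨0, h0c⟩ ⟨2, h2c⟩ := by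
    ext j
    rw [SimpleGraph.mem_neighborFinset, emb_adj, Finset.mem_Icc]
    have hj := j.isLt
    simp only [Fin.le_def]
    omega
  show ((embodiment a b c).neighborFinset x).card = 3
  rw [hset, Fin.card_Icc]
  rfl

lemma deg_B (a b c : ℕ) (h3 : 3 ≤ a) (hab : a < b) (hbc : b < c)
    (x : Fin (c+1)) (hxa : a < x.val) (hxb : x.val ≤ b) :
    (embodiment a b c).degree x = 2 := by
  have h1c : 1 < c + 1 := by omega
  have h2c : 2 < c + 1 := by omega
  have hset : (embodiment a b c).neighborFinset x = Finset.Icc ⟨1, h1c⟩ ⟨2, h2c⟩ := by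
    ext j
    rw [SimpleGraph.mem_neighborFinset, emb_adj, Finset.mem_Icc]
    have hj := j.isLt
    simp only [Fin.le_def]
    omega
  show ((embodiment a b c).neighborFinset x).card = 2
  rw [hset, Fin.card_Icc]
  rfl

lemma deg_C (a b c : ℕ) (h3 : 3 ≤ a) (hab : a < b) (hbc : b < c)
    (x : Fin (c+1)) (hxb : b < x.val) :
    (embodiment a b c).degree x = 1 := by
  have h2c : 2 < c + 1 := by omega
  have hset : (embodiment a b c).neighborFinset x = Finset.Icc ⟨2, h2c⟩ ⟨2, h2c⟩ := by
    ext j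
    rw [SimpleGraph.mem_neighborFinset, emb_adj, Finset.mem_Icc]
    have hj := j.isLt
    have hx := x.isLt
    simp only [Fin.le_def]
    omega
  show ((embodiment a b c).neighborFinset x).card = 1
  rw [hset, Fin.card_Icc]
  rfl

lemma sq_lt_sq₂ {x y : ℕ} (h : x < y) : x^2 < y^2 :=
  Nat.pow_lt_pow_left h two_ne_zero

lemma no_sq_diff9 {x y : ℕ} (h3 : 3 ≤ x) (hxy : x < y) (h : x^2 + 9 = y^2) :
    x = 4 ∧ y = 5 := by
  have hy : y ≤ x + 1 := by
    by_contra h'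
    push_neg at h'
    have h1 : (x+2)^2 ≤ y^2 := Nat.pow_le_pow_left (by omega) 2
    have h2 : (x+2)^2 = x^2 + 4*x + 4 := by ring
    have h3' : 4*x + 4 ≤ 9 := by linarith
    omega
  have hyx : y = x + 1 := by omega
  subst hyx
  have h2 : (x+1)^2 = x^2 + 2*x + 1 := by ring
  have : x = 4 := by linarith
  omega

lemma no_sq_diff4 {x y : ℕ} (h2x : 2 ≤ x) (hxy : x < y) (h : x^2 + 4 = y^2) :
    False := by
  have h1 : (x+1)^2 ≤ y^2 := Nat.pow_le_pow_left (by omega) 2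
  have h2 : (x+1)^2 = x^2 + 2*x + 1 := by ring
  have : 2*x + 1 ≤ 4 := by linarith
  omega

lemma no_sq41 {c : ℕ} (h5 : 5 < c) (h : c^2 = 41) : False := by
  rcases (show c = 6 ∨ 7 ≤ c by omega) with h6 | h7
  · subst h6; norm_num at h
  · have h1 : 7^2 ≤ c^2 := Nat.pow_le_pow_left h7 2
    norm_num at h1
    linarith

lemma sq_eq_nine {a : ℕ} (h : a^2 = 9) : a = 3 := by
  have h1 : a ≤ 3 := by
    by_contra h'
    push_neg at h'
    have h2 : 4^2 ≤ a^2 := Nat.pow_le_pow_left (by omega) 2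
    norm_num at h2
    linarith
  have h2 : 3 ≤ a := by
    by_contra h'
    push_neg at h'
    have h2 : a^2 ≤ 2^2 := Nat.pow_le_pow_left (by omega) 2
    norm_num at h2
    linarith
  omega

theorem stmt_8 (a b c : ℕ) (ha : 0 < a) (hab : a < b) (hbc : b < c)
    (hpyth : a ^ 2 + b ^ 2 = c ^ 2) (hne : (a, b, c) ≠ (3, 4, 5)) :
    ((embodiment a b c).Adj 0 1 ∧ (embodiment a b c).Adj 1 2 ∧ (embodiment a b c).Adj 0 2 ∧
      (embodiment a b c).degree 0 ^ 2 + (embodiment a b c).degree 1 ^ 2 =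
        (embodiment a b c).degree 2 ^ 2) ∧
    ∀ u v w : Fin (c + 1),
      (embodiment a b c).Adj u v → (embodiment a b c).Adj v w → (embodiment a b c).Adj u w →
      (embodiment a b c).degree u ^ 2 + (embodiment a b c).degree v ^ 2 =
        (embodiment a b c).degree w ^ 2 →
      ({u, v, w} : Set (Fin (c + 1))) = {0, 1, 2} := by
  -- a ≥ 3
  have h3 : 3 ≤ a := by
    by_contra h'
    push_neg at h'
    have h1 : (b+1)^2 ≤ c^2 := Nat.pow_le_pow_left (by omega) 2
    have h2 : (b+1)^2 = b^2 + 2*b + 1 := by ring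
    have h4 : a^2 ≤ 2^2 := Nat.pow_le_pow_left (by omega) 2
    norm_num at h4
    have hb2 : 2 ≤ b := by omega
    linarith
  have hc5 : 5 ≤ c := by omega
  have h0v : (0 : Fin (c+1)).val = 0 := rfl
  have e1 : (1:ℕ) < c + 1 := by omega
  have e2 : (2:ℕ) < c + 1 := by omega
  have h1v : (1 : Fin (c+1)).val = 1 := Nat.mod_eq_of_lt e1
  have h2v : (2 : Fin (c+1)).val = 2 := Nat.mod_eq_of_lt e2
  constructor
  · refine ⟨?_, ?_, ?_, ?_⟩
    · rw [emb_adj]; rw [h0v, h1v]; omega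
    · rw [emb_adj]; rw [h1v, h2v]; omega
    · rw [emb_adj]; rw [h0v, h2v]; omega
    · rw [deg_v1 a b c h3 hab hbc 0 h0v, deg_v2 a b c h3 hab hbc 1 h1v,
        deg_v3 a b c h3 hab hbc 2 h2v]
      exact hpyth
  · intro u v w huv hvw huw heq
    rw [emb_adj] at huv hvw huw
    obtain ⟨nuv, ruv⟩ := huv
    obtain ⟨nvw, rvw⟩ := hvw
    obtain ⟨nuw, ruw⟩ := huw
    have hui := u.isLt
    have hvi := v.isLt
    have hwi := w.isLt
    by_cases hu : u.val < 3 <;> by_cases hv : v.val < 3 <;> by_cases hw : w.val < 3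
    · -- all three small : the goal triangle
      have key : ∀ x : Fin (c+1), (x = u ∨ x = v ∨ x = w) ↔ (x = 0 ∨ x = 1 ∨ x = 2) := by
        intro x
        simp only [Fin.ext_iff, h0v, h1v, h2v]
        omega
      ext x
      simp only [Set.mem_insert_iff, Set.mem_singleton_iff]
      exact key x
    · -- u, v small, w big
      exfalso
      push_neg at hw
      have hdu : 3 ≤ (embodiment a b c).degree u := by
        rcases (show u.val = 0 ∨ u.val = 1 ∨ u.val = 2 by omega) with h|h|h
        · rw [deg_v1 a b c h3 hab hbc u h]; exact h3
        · rw [deg_v2 a b c h3 hab hbc u h]; omega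
        · rw [deg_v3 a b c h3 hab hbc u h]; omega
      have hdv : 3 ≤ (embodiment a b c).degree v := by
        rcases (show v.val = 0 ∨ v.val = 1 ∨ v.val = 2 by omega) with h|h|h
        · rw [deg_v1 a b c h3 hab hbc v h]; exact h3
        · rw [deg_v2 a b c h3 hab hbc v h]; omega
        · rw [deg_v3 a b c h3 hab hbc v h]; omega
      have hdw : (embodiment a b c).degree w ≤ 3 := by
        rcases (show (3 ≤ w.val ∧ w.val ≤ a) ∨ (a < w.val ∧ w.val ≤ b) ∨ b < w.val
            by omega) with ⟨p,q⟩|⟨p,q⟩|p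
        · rw [deg_A a b c h3 hab hbc w p q]
        · rw [deg_B a b c h3 hab hbc w p q]; omega
        · rw [deg_C a b c h3 hab hbc w p]; omega
      have e1 : 3^2 ≤ (embodiment a b c).degree u ^ 2 := Nat.pow_le_pow_left hdu 2
      have e2 : 3^2 ≤ (embodiment a b c).degree v ^ 2 := Nat.pow_le_pow_left hdv 2
      have e3 : (embodiment a b c).degree w ^ 2 ≤ 3^2 := Nat.pow_le_pow_left hdw 2
      norm_num at e1 e2 e3
      linarith
    · -- u, w small, v big
      exfalso
      push_neg at hv
      rcases (show (3 ≤ v.val ∧ v.val ≤ a) ∨ (a < v.val ∧ v.val ≤ b) ∨ b < v.val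
          by omega) with ⟨p,q⟩|⟨p,q⟩|p
      · -- v ∈ A, degree 3
        rw [deg_A a b c h3 hab hbc v p q] at heq
        rcases (show u.val = 0 ∨ u.val = 1 ∨ u.val = 2 by omega) with h|h|h <;>
          rcases (show w.val = 0 ∨ w.val = 1 ∨ w.val = 2 by omega) with h'|h'|h'
        · omega
        · rw [deg_v1 a b c h3 hab hbc u h, deg_v2 a b c h3 hab hbc w h'] at heq
          norm_num at heq
          obtain ⟨ha4, hb5⟩ := no_sq_diff9 h3 hab heq
          subst ha4; subst hb5
          norm_num at hpyth
          exact no_sq41 hbc (by linarith)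
        · rw [deg_v1 a b c h3 hab hbc u h, deg_v3 a b c h3 hab hbc w h'] at heq
          norm_num at heq
          obtain ⟨ha4, hc5'⟩ := no_sq_diff9 h3 (by omega) heq
          omega
        · rw [deg_v2 a b c h3 hab hbc u h, deg_v1 a b c h3 hab hbc w h'] at heq
          have := sq_lt_sq₂ hab
          norm_num at heq
          linarith
        · omega
        · rw [deg_v2 a b c h3 hab hbc u h, deg_v3 a b c h3 hab hbc w h'] at heq
          norm_num at heq
          obtain ⟨hb4, hc5'⟩ := no_sq_diff9 (by omega) hbc heq
          subst hb4; subst hc5'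
          norm_num at hpyth
          have : a = 3 := sq_eq_nine (by linarith)
          exact hne (by rw [this])
        · rw [deg_v3 a b c h3 hab hbc u h, deg_v1 a b c h3 hab hbc w h'] at heq
          have := sq_lt_sq₂ (show a < c by omega)
          norm_num at heq
          linarith
        · rw [deg_v3 a b c h3 hab hbc u h, deg_v2 a b c h3 hab hbc w h'] at heq
          have := sq_lt_sq₂ hbc
          norm_num at heq
          linarith
        · omega
      · -- v ∈ B, degree 2 ; u, w ∈ {1, 2}
        rw [deg_B a b c h3 hab hbc v p q] at heq
        have hu12 : u.val = 1 ∨ u.val = 2 := by omega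
        have hw12 : w.val = 1 ∨ w.val = 2 := by omega
        rcases hu12 with h|h <;> rcases hw12 with h'|h'
        · omega
        · rw [deg_v2 a b c h3 hab hbc u h, deg_v3 a b c h3 hab hbc w h'] at heq
          norm_num at heq
          exact no_sq_diff4 (by omega) hbc heq
        · rw [deg_v3 a b c h3 hab hbc u h, deg_v2 a b c h3 hab hbc w h'] at heq
          have := sq_lt_sq₂ hbc
          norm_num at heq
          linarith
        · omega
      · -- v ∈ C : u = w = 2, contradiction
        omega
    · -- u small, v, w big : impossible (v, w not adjacent)
      exfalso
      push_neg at hv hw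
      omega
    · -- u big, v, w small
      exfalso
      push_neg at hu
      rcases (show (3 ≤ u.val ∧ u.val ≤ a) ∨ (a < u.val ∧ u.val ≤ b) ∨ b < u.val
          by omega) with ⟨p,q⟩|⟨p,q⟩|p
      · rw [deg_A a b c h3 hab hbc u p q] at heq
        rcases (show v.val = 0 ∨ v.val = 1 ∨ v.val = 2 by omega) with h|h|h <;>
          rcases (show w.val = 0 ∨ w.val = 1 ∨ w.val = 2 by omega) with h'|h'|h'
        · omega
        · rw [deg_v1 a b c h3 hab hbc v h, deg_v2 a b c h3 hab hbc w h'] at heq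
          norm_num at heq
          obtain ⟨ha4, hb5⟩ := no_sq_diff9 h3 hab (by linarith)
          subst ha4; subst hb5
          norm_num at hpyth
          exact no_sq41 hbc (by linarith)
        · rw [deg_v1 a b c h3 hab hbc v h, deg_v3 a b c h3 hab hbc w h'] at heq
          norm_num at heq
          have heq' : a^2 + 9 = c^2 := by linarith
          obtain ⟨ha4, hc5'⟩ := no_sq_diff9 h3 (lt_trans hab hbc) heq'
          omega
        · rw [deg_v2 a b c h3 hab hbc v h, deg_v1 a b c h3 hab hbc w h'] at heq
          have := sq_lt_sq₂ hab
          norm_num at heq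
          linarith
        · omega
        · rw [deg_v2 a b c h3 hab hbc v h, deg_v3 a b c h3 hab hbc w h'] at heq
          norm_num at heq
          obtain ⟨hb4, hc5'⟩ := no_sq_diff9 (by omega) hbc (by linarith)
          subst hb4; subst hc5'
          norm_num at hpyth
          have : a = 3 := sq_eq_nine (by linarith)
          exact hne (by rw [this])
        · rw [deg_v3 a b c h3 hab hbc v h, deg_v1 a b c h3 hab hbc w h'] at heq
          have := sq_lt_sq₂ (show a < c by omega)
          norm_num at heq
          linarith
        · rw [deg_v3 a b c h3 hab hbc v h, deg_v2 a b c h3 hab hbc w h'] at heq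
          have := sq_lt_sq₂ hbc
          norm_num at heq
          linarith
        · omega
      · rw [deg_B a b c h3 hab hbc u p q] at heq
        have hv12 : v.val = 1 ∨ v.val = 2 := by omega
        have hw12 : w.val = 1 ∨ w.val = 2 := by omega
        rcases hv12 with h|h <;> rcases hw12 with h'|h'
        · omega
        · rw [deg_v2 a b c h3 hab hbc v h, deg_v3 a b c h3 hab hbc w h'] at heq
          norm_num at heq
          exact no_sq_diff4 (by omega) hbc (by linarith)
        · rw [deg_v3 a b c h3 hab hbc v h, deg_v2 a b c h3 hab hbc w h'] at heq
          have := sq_lt_sq₂ hbc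
          norm_num at heq
          linarith
        · omega
      · omega
    · -- u, w big : impossible
      exfalso
      push_neg at hu hw
      omega
    · -- u, v big : impossible
      exfalso
      push_neg at hu hv
      omega
    · -- all big : impossible
      exfalso
      push_neg at hu hv
      omega
end

section
/- Let (a,b,c) be a Pythagorean triple of positive integers with a < b < c and a² + b² = c². Then the independence number of the graphical embodiment E(a,b,c) is two less than the largest number of the triple: α(E(a,b,c)) = c − 2. -/
lemma card_filter_ge (n k : ℕ) :
    ((Finset.univ : Finset (Fin n)).filter (fun i => k ≤ i.val)).card = n - k := by
  rw [← Nat.card_Ico k n]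
  apply Finset.card_bij (fun i _ => i.val)
  · intro i hi
    simp only [Finset.mem_filter, Finset.mem_univ, true_and] at hi
    simp only [Finset.mem_Ico]
    exact ⟨hi, i.isLt⟩
  · intro i _ j _ h
    exact Fin.ext h
  · intro m hm
    simp only [Finset.mem_Ico] at hm
    exact ⟨⟨m, hm.2⟩, by simp [hm.1], rfl⟩

lemma embodiment_adj (a b c : ℕ) (i : ℕ) (hi : i < c + 1) (v : Fin (c + 1))
    (hne : i ≠ v.val)
    (h : (i < 3 ∧ v.val < 3) ∨ (3 ≤ v.val ∧ v.val ≤ a ∧ i < 3) ∨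
         (a < v.val ∧ v.val ≤ b ∧ (i = 1 ∨ i = 2)) ∨
         (b < v.val ∧ v.val ≤ c ∧ i = 2)) :
    (embodiment a b c).Adj ⟨i, hi⟩ v := by
  simp only [embodiment, SimpleGraph.fromRel_adj]
  exact ⟨fun e => hne (congrArg Fin.val e), Or.inl h⟩

theorem stmt_13 (a b c : ℕ) (ha : 0 < a) (hab : a < b) (hbc : b < c)
    (hpyth : a ^ 2 + b ^ 2 = c ^ 2) :
    IsGreatest {k : ℕ | ∃ s : Finset (Fin (c + 1)), s.card = k ∧
      ∀ u ∈ s, ∀ v ∈ s, ¬ (embodiment a b c).Adj u v} (c - 2) := by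
  have ha3 : 3 ≤ a := by
    by_contra h
    push_neg at h
    have h2 : (b + 1) ^ 2 ≤ c ^ 2 := Nat.pow_le_pow_left hbc 2
    nlinarith
  have hc5 : 5 ≤ c := by omega
  constructor
  · refine ⟨Finset.univ.filter (fun i => 3 ≤ i.val), ?_, ?_⟩
    · rw [card_filter_ge]
      omega
    · intro u hu v hv
      simp only [Finset.mem_filter, Finset.mem_univ, true_and] at hu hv
      simp only [embodiment, SimpleGraph.fromRel_adj]
      rintro ⟨-, h | h⟩ <;> omega
  · rintro k ⟨s, rfl, hind⟩
    by_cases h2 : (⟨2, by omega⟩ : Fin (c + 1)) ∈ s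
    · have hsub : s ⊆ {⟨2, by omega⟩} := by
        intro u hu
        simp only [Finset.mem_singleton]
        by_contra hne
        have hval : (2 : ℕ) ≠ u.val := fun e => hne (Fin.ext e.symm)
        exact hind _ h2 u hu (embodiment_adj a b c 2 (by omega) u hval
          (by have := u.isLt; omega))
      have := Finset.card_le_card hsub
      simp only [Finset.card_singleton] at this
      omega
    by_cases h1 : (⟨1, by omega⟩ : Fin (c + 1)) ∈ s
    · have hsub : s ⊆ insert ⟨1, by omega⟩
          (Finset.univ.filter (fun i : Fin (c + 1) => b + 1 ≤ i.val)) := by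
        intro u hu
        simp only [Finset.mem_insert, Finset.mem_filter, Finset.mem_univ, true_and]
        by_contra hne
        push_neg at hne
        obtain ⟨hne1, hub⟩ := hne
        have hval : (1 : ℕ) ≠ u.val := fun e => hne1 (Fin.ext e.symm)
        exact hind _ h1 u hu (embodiment_adj a b c 1 (by omega) u hval (by omega))
      have := Finset.card_le_card hsub
      have hcard := Finset.card_insert_le (⟨1, by omega⟩ : Fin (c + 1))
        (Finset.univ.filter (fun i : Fin (c + 1) => b + 1 ≤ i.val))
      rw [card_filter_ge] at hcard
      omega
    by_cases h0 : (⟨0, by omega⟩ : Fin (c + 1)) ∈ s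
    · have hsub : s ⊆ insert ⟨0, by omega⟩
          (Finset.univ.filter (fun i : Fin (c + 1) => a + 1 ≤ i.val)) := by
        intro u hu
        simp only [Finset.mem_insert, Finset.mem_filter, Finset.mem_univ, true_and]
        by_contra hne
        push_neg at hne
        obtain ⟨hne0, hua⟩ := hne
        have hval : (0 : ℕ) ≠ u.val := fun e => hne0 (Fin.ext e.symm)
        exact hind _ h0 u hu (embodiment_adj a b c 0 (by omega) u hval (by omega))
      have := Finset.card_le_card hsub
      have hcard := Finset.card_insert_le (⟨0, by omega⟩ : Fin (c + 1))
        (Finset.univ.filter (fun i : Fin (c + 1) => a + 1 ≤ i.val))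
      rw [card_filter_ge] at hcard
      omega
    · have hsub : s ⊆ Finset.univ.filter (fun i : Fin (c + 1) => 3 ≤ i.val) := by
        intro u hu
        simp only [Finset.mem_filter, Finset.mem_univ, true_and]
        by_contra hne
        obtain ⟨uv, hult⟩ := u
        push_neg at hne
        interval_cases uv
        · exact absurd hu h0
        · exact absurd hu h1
        · exact absurd hu h2
      have := Finset.card_le_card hsub
      rw [card_filter_ge] at this
      omega
end

section
/- For every n ≥ 4, the number of triangles of the underlying Jaco graph satisfies the recursion h(J*_{n+1}(1)) = h(J*_n(1)) + Σ_{i=1}^{f(n+1)−1} i, where f(n+1) is the in-degree of vertex v_{n+1} in the infinite Jaco graph (equivalently, the added term is f(n+1)·(f(n+1)−1)/2). -/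
/-- The in-degree function `f` of the infinite Jaco graph `J_∞(1)`:
`f j` is the number of indices `1 ≤ i < j` with `j ≤ 2i - f i`. -/
def jacoIn (j : ℕ) : ℕ :=
  ((Finset.range j).attach.filter
    (fun i => 1 ≤ i.val ∧ j ≤ 2 * i.val - jacoIn i.val)).card
termination_by j
decreasing_by
  all_goals exact Finset.mem_range.mp ‹{x // x ∈ Finset.range j}›.2

/-- The underlying Jaco graph `J*_n(1)` on vertices `v₁, …, v_n`; the element
`x : Fin n` represents the vertex `v_{x+1}`, and for `i < j` the vertices `v_i` and `v_j`
are adjacent iff `j ≤ 2i - f i`. -/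
def jacoGraph (n : ℕ) : SimpleGraph (Fin n) :=
  SimpleGraph.fromRel (fun x y =>
    x.val + 1 < y.val + 1 ∧ y.val + 1 ≤ 2 * (x.val + 1) - jacoIn (x.val + 1))

instance (n : ℕ) : DecidableRel (jacoGraph n).Adj := fun x y =>
  decidable_of_iff _ (SimpleGraph.fromRel_adj _ x y).symm

lemma jacoIn_eq (j : ℕ) : jacoIn j =
    ((Finset.range j).filter (fun i => 1 ≤ i ∧ j ≤ 2 * i - jacoIn i)).card := by
  rw [jacoIn]
  apply Finset.card_bij (fun a _ => a.val)
  · intro a ha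
    simp only [Finset.mem_filter] at ha ⊢
    exact ⟨a.2, ha.2⟩
  · intro a _ b _ h
    exact Subtype.ext h
  · intro b hb
    simp only [Finset.mem_filter] at hb
    exact ⟨⟨b, hb.1⟩, Finset.mem_filter.mpr ⟨Finset.mem_attach _ _, hb.2⟩, rfl⟩

lemma jaco_adj {n : ℕ} {x y : Fin n} (h : x.val < y.val) :
    (jacoGraph n).Adj x y ↔ y.val + 1 ≤ 2 * (x.val + 1) - jacoIn (x.val + 1) := by
  rw [jacoGraph, SimpleGraph.fromRel_adj]
  constructor
  · rintro ⟨hne, (⟨-, h2⟩ | ⟨h1, -⟩)⟩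
    · exact h2
    · omega
  · intro h2
    exact ⟨fun he => absurd (congrArg Fin.val he) (Nat.ne_of_lt h), Or.inl ⟨by omega, h2⟩⟩

lemma mem_nbr {n : ℕ} {x : Fin (n + 1)} :
    (jacoGraph (n + 1)).Adj (Fin.last n) x ↔
      x.val < n ∧ n + 1 ≤ 2 * (x.val + 1) - jacoIn (x.val + 1) := by
  constructor
  · intro hadj
    have hne : x ≠ Fin.last n := fun he => (jacoGraph _).irrefl (he ▸ hadj)
    have hxn : x.val < n := by
      have := x.isLt
      have : x.val ≠ n := fun h => hne (Fin.ext (by simp [h]))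
      omega
    have h2 := (jaco_adj (x := x) (y := Fin.last n)
      (by simpa using hxn)).mp hadj.symm
    simp only [Fin.val_last] at h2
    exact ⟨hxn, h2⟩
  · rintro ⟨h1, h2⟩
    have := (jaco_adj (x := x) (y := Fin.last n) (by simpa using h1)).mpr
      (by simpa using h2)
    exact this.symm

lemma deg_last (n : ℕ) :
    ((jacoGraph (n + 1)).neighborFinset (Fin.last n)).card = jacoIn (n + 1) := by
  rw [jacoIn_eq]
  apply Finset.card_bij (fun x _ => x.val + 1)
  · intro x hx
    rw [SimpleGraph.mem_neighborFinset] at hx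
    obtain ⟨h1, h2⟩ := mem_nbr.mp hx
    simp only [Finset.mem_filter, Finset.mem_range]
    exact ⟨by omega, by omega, h2⟩
  · intro a _ b _ h
    exact Fin.ext (by omega)
  · intro i hi
    simp only [Finset.mem_filter, Finset.mem_range] at hi
    obtain ⟨hir, hi1, hid⟩ := hi
    refine ⟨⟨i - 1, by omega⟩, ?_, by simp; omega⟩
    rw [SimpleGraph.mem_neighborFinset]
    apply mem_nbr.mpr
    constructor
    · simp; omega
    · simpa [Nat.sub_add_cancel hi1] using hid

lemma nbr_clique {n : ℕ} {x y : Fin (n + 1)}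
    (hx : (jacoGraph (n + 1)).Adj (Fin.last n) x)
    (hy : (jacoGraph (n + 1)).Adj (Fin.last n) y) (hxy : x ≠ y) :
    (jacoGraph (n + 1)).Adj x y := by
  obtain ⟨hx1, hx2⟩ := mem_nbr.mp hx
  obtain ⟨hy1, hy2⟩ := mem_nbr.mp hy
  rcases lt_trichotomy x.val y.val with h | h | h
  · exact (jaco_adj h).mpr (le_trans (by omega) hx2)
  · exact absurd (Fin.ext h) hxy
  · exact ((jaco_adj h).mpr (le_trans (by omega) hy2)).symm

lemma count_with_t (n : ℕ) :
    (((jacoGraph (n + 1)).cliqueFinset 3).filter (fun s => Fin.last n ∈ s)).card =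
      (jacoIn (n + 1)).choose 2 := by
  classical
  rw [← deg_last n, ← Finset.card_powersetCard]
  apply Finset.card_bij (fun s _ => s.erase (Fin.last n))
  · intro s hs
    rw [Finset.mem_filter, SimpleGraph.mem_cliqueFinset_iff,
      SimpleGraph.isNClique_iff] at hs
    obtain ⟨⟨hcl, hcard⟩, hmem⟩ := hs
    rw [Finset.mem_powersetCard]
    constructor
    · intro x hxe
      rw [Finset.mem_erase] at hxe
      rw [SimpleGraph.mem_neighborFinset]
      exact hcl hmem hxe.2 (Ne.symm hxe.1)
    · rw [Finset.card_erase_of_mem hmem, hcard]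
  · intro s1 hs1 s2 hs2 h
    rw [Finset.mem_filter] at hs1 hs2
    rw [← Finset.insert_erase hs1.2, h, Finset.insert_erase hs2.2]
  · intro p hp
    rw [Finset.mem_powersetCard] at hp
    obtain ⟨hsub, hcard⟩ := hp
    have htp : Fin.last n ∉ p := by
      intro h
      have := hsub h
      rw [SimpleGraph.mem_neighborFinset] at this
      exact (jacoGraph _).irrefl this
    refine ⟨insert (Fin.last n) p, ?_, by rw [Finset.erase_insert htp]⟩
    rw [Finset.mem_filter, SimpleGraph.mem_cliqueFinset_iff,
      SimpleGraph.isNClique_iff]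
    refine ⟨⟨?_, ?_⟩, Finset.mem_insert_self _ _⟩
    · intro a ha b hb hab
      simp only [Finset.coe_insert, Set.mem_insert_iff, Finset.mem_coe] at ha hb
      rcases ha with rfl | ha
      · rcases hb with rfl | hb
        · exact absurd rfl hab
        · exact (SimpleGraph.mem_neighborFinset _ _ _).mp (hsub hb)
      · rcases hb with rfl | hb
        · exact ((SimpleGraph.mem_neighborFinset _ _ _).mp (hsub ha)).symm
        · exact nbr_clique ((SimpleGraph.mem_neighborFinset _ _ _).mp (hsub ha))
            ((SimpleGraph.mem_neighborFinset _ _ _).mp (hsub hb)) hab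
    · rw [Finset.card_insert_of_notMem htp, hcard]

lemma adj_castSucc {n : ℕ} {a b : Fin n} :
    (jacoGraph (n + 1)).Adj a.castSucc b.castSucc ↔ (jacoGraph n).Adj a b := by
  rcases lt_trichotomy a.val b.val with h | h | h
  · rw [jaco_adj (x := a) (y := b) h,
      jaco_adj (x := a.castSucc) (y := b.castSucc) (by simpa using h)]
    simp
  · have : a = b := Fin.ext h
    subst this
    simp
  · rw [SimpleGraph.adj_comm, SimpleGraph.adj_comm (jacoGraph n),
      jaco_adj (x := b) (y := a) h,
      jaco_adj (x := b.castSucc) (y := a.castSucc) (by simpa using h)]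
    simp

lemma count_without_t (n : ℕ) :
    (((jacoGraph (n + 1)).cliqueFinset 3).filter (fun s => Fin.last n ∉ s)).card =
      ((jacoGraph n).cliqueFinset 3).card := by
  classical
  symm
  apply Finset.card_bij
    (fun s _ => s.map ⟨Fin.castSucc, Fin.castSucc_injective n⟩)
  · intro s hs
    rw [SimpleGraph.mem_cliqueFinset_iff, SimpleGraph.isNClique_iff] at hs
    obtain ⟨hcl, hcard⟩ := hs
    rw [Finset.mem_filter, SimpleGraph.mem_cliqueFinset_iff,
      SimpleGraph.isNClique_iff]
    refine ⟨⟨?_, by rw [Finset.card_map, hcard]⟩, ?_⟩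
    · intro a ha b hb hab
      simp only [Finset.coe_map, Set.mem_image, Finset.mem_coe,
        Function.Embedding.coeFn_mk] at ha hb
      obtain ⟨a', ha', rfl⟩ := ha
      obtain ⟨b', hb', rfl⟩ := hb
      have hne : a' ≠ b' := fun h => hab (by rw [h])
      exact adj_castSucc.mpr (hcl ha' hb' hne)
    · intro hmem
      rw [Finset.mem_map] at hmem
      obtain ⟨a, _, ha⟩ := hmem
      have := congrArg Fin.val ha
      simp only [Function.Embedding.coeFn_mk, Fin.coe_castSucc, Fin.val_last] at this
      exact absurd this (Nat.ne_of_lt a.isLt)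
  · intro s1 _ s2 _ h
    exact Finset.map_injective _ h
  · intro s hs
    rw [Finset.mem_filter, SimpleGraph.mem_cliqueFinset_iff,
      SimpleGraph.isNClique_iff] at hs
    obtain ⟨⟨hcl, hcard⟩, hmem⟩ := hs
    have hsub : s ⊆ Finset.univ.map ⟨Fin.castSucc, Fin.castSucc_injective n⟩ := by
      intro x hx
      rw [Finset.mem_map]
      have hxn : x.val < n := by
        have := x.isLt
        have : x.val ≠ n := fun h => hmem (by rwa [show x = Fin.last n from Fin.ext h] at hx)
        omega
      exact ⟨⟨x.val, hxn⟩, Finset.mem_univ _, Fin.ext (by simp)⟩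
    obtain ⟨u, -, rfl⟩ := Finset.subset_map_iff.mp hsub
    refine ⟨u, ?_, rfl⟩
    rw [SimpleGraph.mem_cliqueFinset_iff, SimpleGraph.isNClique_iff]
    refine ⟨?_, by rwa [Finset.card_map] at hcard⟩
    intro a ha b hb hab
    have hne : a.castSucc ≠ b.castSucc := fun h => hab (Fin.castSucc_injective n h)
    apply adj_castSucc.mp
    apply hcl _ _ hne <;>
      · rw [Finset.mem_coe, Finset.mem_map]
        exact ⟨_, by assumption, rfl⟩

lemma choose_two_eq_sum (m : ℕ) :
    m.choose 2 = ∑ i ∈ Finset.Icc 1 (m - 1), i := by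
  rcases Nat.eq_zero_or_pos m with rfl | hm
  · simp
  · have hr : Finset.range m = insert 0 (Finset.Icc 1 (m - 1)) := by
      ext x
      simp only [Finset.mem_range, Finset.mem_insert, Finset.mem_Icc]
      omega
    have h0 : (0 : ℕ) ∉ Finset.Icc 1 (m - 1) := by simp
    have hsum : ∑ i ∈ Finset.range m, i = ∑ i ∈ Finset.Icc 1 (m - 1), i := by
      rw [hr, Finset.sum_insert h0, Nat.zero_add]
    have hg := Finset.sum_range_id_mul_two m
    rw [Nat.choose_two_right]
    omega

theorem stmt_16 (n : ℕ) (hn : 4 ≤ n) :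
    ((jacoGraph (n + 1)).cliqueFinset 3).card =
      ((jacoGraph n).cliqueFinset 3).card + ∑ i ∈ Finset.Icc 1 (jacoIn (n + 1) - 1), i := by
  classical
  rw [← Finset.card_filter_add_card_filter_not
    (s := (jacoGraph (n + 1)).cliqueFinset 3) (p := fun s => Fin.last n ∈ s),
    count_with_t, choose_two_eq_sum]
  have := count_without_t n
  rw [this]
  ring
end

section
/- Let i < j < k be such that the vertices v_i, v_j, v_k form a triangle in the underlying Jaco graph J*_n(1), and let l ≥ 1 be an integer such that the edge v_{li}v_{lk} exists in the infinite Jaco graph, i.e. lk ≤ 2·li − f(li). Then for every m ≥ lk, the vertices v_{li}, v_{lj}, v_{lk} form a triangle in J*_m(1). -/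
lemma jacoIn_le (j : ℕ) : jacoIn j ≤ j := by
  rw [jacoIn_eq]
  exact (Finset.card_filter_le _ _).trans (by simp)

lemma jacoIn_succ_le (j : ℕ) : jacoIn (j + 1) ≤ jacoIn j + 1 := by
  rw [jacoIn_eq (j + 1), jacoIn_eq j]
  calc ((Finset.range (j+1)).filter (fun i => 1 ≤ i ∧ j + 1 ≤ 2 * i - jacoIn i)).card
      ≤ (insert j ((Finset.range j).filter (fun i => 1 ≤ i ∧ j ≤ 2 * i - jacoIn i))).card := by
        apply Finset.card_le_card
        intro x hx
        simp only [Finset.mem_filter, Finset.mem_range, Nat.lt_succ_iff] at hx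
        rcases Nat.lt_or_ge x j with h | h
        · exact Finset.mem_insert_of_mem (Finset.mem_filter.mpr
            ⟨Finset.mem_range.mpr h, hx.2.1, le_trans (Nat.le_succ j) hx.2.2⟩)
        · have hxj : x = j := le_antisymm hx.1 h
          simp [hxj]
    _ ≤ _ := Finset.card_insert_le _ _

lemma jaco_mono : Monotone (fun i => 2 * i - jacoIn i) := by
  apply monotone_nat_of_le_succ
  intro n
  have h1 := jacoIn_succ_le n
  have h2 := jacoIn_le n
  show 2 * n - jacoIn n <= 2 * (n + 1) - jacoIn (n + 1)
  omega

theorem stmt_18 (n i j k l : ℕ) (hi1 : 1 ≤ i) (hij : i < j) (hjk : j < k) (hl : 1 ≤ l)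
    (hin : i - 1 < n) (hjn : j - 1 < n) (hkn : k - 1 < n)
    (h1 : (jacoGraph n).Adj ⟨i - 1, hin⟩ ⟨j - 1, hjn⟩)
    (h2 : (jacoGraph n).Adj ⟨j - 1, hjn⟩ ⟨k - 1, hkn⟩)
    (h3 : (jacoGraph n).Adj ⟨i - 1, hin⟩ ⟨k - 1, hkn⟩)
    (hedge : l * k ≤ 2 * (l * i) - jacoIn (l * i)) :
    ∀ m : ℕ, l * k ≤ m →
      ∀ (hi' : l * i - 1 < m) (hj' : l * j - 1 < m) (hk' : l * k - 1 < m),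
        (jacoGraph m).Adj ⟨l * i - 1, hi'⟩ ⟨l * j - 1, hj'⟩ ∧
        (jacoGraph m).Adj ⟨l * j - 1, hj'⟩ ⟨l * k - 1, hk'⟩ ∧
        (jacoGraph m).Adj ⟨l * i - 1, hi'⟩ ⟨l * k - 1, hk'⟩ := by
  intro m hm hi' hj' hk'
  have hli : 1 ≤ l * i := Nat.one_le_iff_ne_zero.mpr (by positivity)
  have hlij : l * i < l * j := (Nat.mul_lt_mul_left (show 0 < l by omega)).mpr hij
  have hljk : l * j < l * k := (Nat.mul_lt_mul_left (show 0 < l by omega)).mpr hjk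
  have ei : l * i - 1 + 1 = l * i := Nat.succ_pred_eq_of_pos hli
  have hlj : 0 < l * j := Nat.mul_pos (by omega) (by omega)
  have hlk : 0 < l * k := Nat.mul_pos (by omega) (by omega)
  have ej : l * j - 1 + 1 = l * j := Nat.succ_pred_eq_of_pos hlj
  have ek : l * k - 1 + 1 = l * k := Nat.succ_pred_eq_of_pos hlk
  have hmono : 2 * (l * i) - jacoIn (l * i) ≤ 2 * (l * j) - jacoIn (l * j) :=
    jaco_mono (le_of_lt hlij)
  refine ⟨?_, ?_, ?_⟩ <;>
    simp only [jacoGraph, SimpleGraph.fromRel_adj, ne_eq, Fin.mk.injEq, ei, ej, ek]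
  · exact ⟨by omega, Or.inl ⟨hlij, le_trans (le_of_lt hljk) hedge⟩⟩
  · exact ⟨by omega, Or.inl ⟨hljk, le_trans hedge hmono⟩⟩
  · exact ⟨by omega, Or.inl ⟨lt_trans hlij hljk, hedge⟩⟩
end
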